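/- Let n ≥ 1 and let R_1, …, R_n be i.i.d. exponential random variables with rate 1. Then: (i) for every x in the probability simplex Δ_n and every i with x_i > 0, P[ R_i/x_i < R_j/x_j for all j ≠ i with x_j > 0 ] = x_i; and (ii) for all x, y ∈ Δ_n, P[ there exists an index i with x_i > 0 and y_i > 0 such that R_i/x_i < R_j/x_j for all j ≠ i with x_j > 0 and R_i/y_i < R_j/y_j for all j ≠ i with y_j > 0 ] ≥ 1 − Σ_j |x_j − y_j|. -/

import Mathlib

/-!
Conditioning on `R_i = r`, independence gives `P[d_j r < R_j ∀ j ≠ i] = exp(-r ∑_{j ≠ i} d_j)`,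
and integrating against `Exp(1)` gives `P[d_j R_i < R_j ∀ j ≠ i] = 1 / (1 + ∑_{j ≠ i} d_j)`.
With `d_j = x_j / x_i` this is `x_i`; coordinates with `x_j = 0` only matter on the null event
`R_j ≤ 0`.

For (ii), put `m_i = min(x_i, y_i)`, `M_j = max(x_j, y_j)` and `δ = ∑ |x_j - y_j|`. Index `i`
wins for both `x` and `y` as soon as `M_j R_i < m_i R_j` for all `j ≠ i`. These events are almost
surely disjoint in `i` and have probability `m_i / (m_i + ∑_{j ≠ i} M_j) ≥ m_i / ∑ M`, and
`∑ m / ∑ M = (1 - δ/2) / (1 + δ/2) ≥ 1 - δ`.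
-/

open MeasureTheory ProbabilityTheory
open scoped ENNReal

/-- `x ∈ Δ_n`: all coordinates in `[0,1]` and the coordinates sum to `1`. -/
def memSimplex (n : ℕ) (x : Fin n → ℝ) : Prop :=
  (∀ i, 0 ≤ x i ∧ x i ≤ 1) ∧ ∑ i, x i = 1

open Finset Function

lemma ae_pos_expMeasure_one : ∀ᵐ r ∂expMeasure 1, 0 < r := by
  have := isProbabilityMeasure_expMeasure one_pos
  have h : expMeasure 1 (Set.Iic 0) = 0 := by
    rw [← ofReal_cdf, cdf_expMeasure_eq one_pos]
    simp
  rw [ae_iff]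
  simp only [not_lt]
  exact h

lemma expMeasure_one_Ioi {t : ℝ} (ht : 0 ≤ t) :
    expMeasure 1 (Set.Ioi t) = ENNReal.ofReal (Real.exp (-t)) := by
  have := isProbabilityMeasure_expMeasure one_pos
  rw [← Set.compl_Iic, prob_compl_eq_one_sub measurableSet_Iic, ← ofReal_cdf,
    cdf_expMeasure_eq one_pos, if_pos ht, one_mul, ← ENNReal.ofReal_one,
    ← ENNReal.ofReal_sub _ (sub_nonneg.2 (Real.exp_le_one_iff.2 (by linarith))), sub_sub_cancel]

lemma lintegral_exp_neg_mul_expMeasure_one {c : ℝ} (hc : 0 ≤ c) :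
    ∫⁻ r, ENNReal.ofReal (Real.exp (-(c * r))) ∂expMeasure 1 =
      ENNReal.ofReal (1 / (1 + c)) := by
  have hc1 : 0 < 1 + c := by linarith
  have hpdf : exponentialPDF 1 * (fun r => ENNReal.ofReal (Real.exp (-(c * r))))
      = fun r => ENNReal.ofReal (1 / (1 + c)) * exponentialPDF (1 + c) r := by
    funext r
    simp only [Pi.mul_apply, exponentialPDF_eq]
    split_ifs
    · rw [← ENNReal.ofReal_mul (by positivity), ← ENNReal.ofReal_mul (by positivity), one_mul,
        ← Real.exp_add]
      congr 1
      field_simp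
      congr 1
      ring
    · simp
  have hmeas (r : ℝ) : Measurable (exponentialPDF r) :=
    (measurable_exponentialPDFReal r).ennreal_ofReal
  rw [show expMeasure 1 = volume.withDensity (exponentialPDF 1) from rfl,
    lintegral_withDensity_eq_lintegral_mul _ (hmeas 1) (by fun_prop), hpdf,
    lintegral_const_mul _ (hmeas _), lintegral_exponentialPDF_eq_one hc1, mul_one]

lemma one_sub_sum_abs_sub_le_sum_min_div {ι : Type*} [Fintype ι] [DecidableEq ι]
    {x y : ι → ℝ} (hx : ∀ j, 0 ≤ x j) (hx1 : ∑ j, x j = 1) (hy : ∀ j, 0 ≤ y j)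
    (hy1 : ∑ j, y j = 1) :
    1 - ∑ j, |x j - y j| ≤
      ∑ i, min (x i) (y i) / (min (x i) (y i) + ∑ j ∈ univ.erase i, max (x j) (y j)) := by
  set δ := ∑ j, |x j - y j|
  set M := ∑ j, max (x j) (y j)
  have hmin_add_max : ∑ j, min (x j) (y j) + M = 2 := by
    rw [← sum_add_distrib, sum_congr rfl fun j _ => min_add_max (x j) (y j), sum_add_distrib,
      hx1, hy1, one_add_one_eq_two]
  have hmax_sub_min : M - ∑ j, min (x j) (y j) = δ := by
    rw [← sum_sub_distrib]
    exact sum_congr rfl fun j _ => (max_sub_min_eq_abs' (x j) (y j))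
  have hδ : 0 ≤ δ := sum_nonneg fun j _ => abs_nonneg _
  have hM : 0 < M := by linarith
  have hterm : ∀ i, min (x i) (y i) / M ≤
      min (x i) (y i) / (min (x i) (y i) + ∑ j ∈ univ.erase i, max (x j) (y j)) := by
    intro i
    rcases (le_min (hx i) (hy i)).eq_or_lt with h0 | hpos
    · simp [← h0]
    · refine div_le_div_of_nonneg_left hpos.le
        (add_pos_of_pos_of_nonneg hpos (sum_nonneg fun j _ => (hx j).trans (le_max_left _ _))) ?_
      exact (add_le_add_left min_le_max _).trans_eq
        (add_sum_erase univ (fun j => max (x j) (y j)) (mem_univ i))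
  calc 1 - δ ≤ (∑ j, min (x j) (y j)) / M := by
        rw [le_div_iff₀ hM]
        nlinarith
    _ = ∑ i, min (x i) (y i) / M := sum_div _ _ _
    _ ≤ _ := sum_le_sum fun i _ => hterm i

lemma forall_div_lt_div_of_forall_mul_lt_mul {ι : Type*} {r z w : ι → ℝ} {a : ℝ} {i : ι}
    (hr : ∀ j, 0 ≤ r j) (hzi : 0 < z i) (hza : a ≤ z i) (hzw : ∀ j, z j ≤ w j)
    (h : ∀ j ≠ i, w j * r i < a * r j) : ∀ j ≠ i, 0 < z j → r i / z i < r j / z j := by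
  intro j hj hzj
  rw [div_lt_div_iff₀ hzi hzj]
  calc r i * z j = z j * r i := mul_comm _ _
    _ ≤ w j * r i := mul_le_mul_of_nonneg_right (hzw j) (hr i)
    _ < a * r j := h j hj
    _ ≤ z i * r j := mul_le_mul_of_nonneg_right hza (hr j)
    _ = r j * z i := mul_comm _ _

lemma not_forall_max_mul_lt_min_mul {ι : Type*} {r x y : ι → ℝ} (hr : ∀ j, 0 ≤ r j)
    {i k : ι} (hik : i ≠ k) (hi : ∀ j ≠ i, max (x j) (y j) * r i < min (x i) (y i) * r j) :
    ¬ ∀ j ≠ k, max (x j) (y j) * r k < min (x k) (y k) * r j := fun hk =>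
  have hle (j l : ι) : min (x j) (y j) * r l ≤ max (x j) (y j) * r l :=
    mul_le_mul_of_nonneg_right min_le_max (hr l)
  lt_irrefl _ ((((hi k hik.symm).trans_le (hle i k)).trans (hk i hik)).trans_le (hle k i))

section ExponentialRace

variable {ι Ω : Type*} [MeasurableSpace Ω] {μ : Measure Ω}

lemma map_eq_expMeasure_one_of_cdf [IsProbabilityMeasure μ] {X : Ω → ℝ} (hX : Measurable X)
    (hcdf : ∀ t, 0 ≤ t → μ {ω | X ω ≤ t} = ENNReal.ofReal (1 - Real.exp (-t))) :
    μ.map X = expMeasure 1 := by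
  have := isProbabilityMeasure_expMeasure one_pos
  have := Measure.isProbabilityMeasure_map (μ := μ) hX.aemeasurable
  refine Measure.ext_of_Iic _ _ fun t => ?_
  rw [Measure.map_apply hX measurableSet_Iic, ← ofReal_cdf, cdf_expMeasure_eq one_pos]
  split_ifs with ht
  · rw [one_mul]
    exact hcdf t ht
  · rw [ENNReal.ofReal_zero]
    refine measure_mono_null (fun ω (hω : X ω ≤ t) => ?_) (by simpa using hcdf 0 le_rfl)
    exact hω.trans (not_le.1 ht).le

variable {R : ι → Ω → ℝ}

lemma ae_forall_pos_of_map_eq_expMeasure [Countable ι] (hmeas : ∀ j, Measurable (R j))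
    (hlaw : ∀ j, μ.map (R j) = expMeasure 1) : ∀ᵐ ω ∂μ, ∀ j, 0 < R j ω :=
  ae_all_iff.2 fun j => ae_of_ae_map (hmeas j).aemeasurable (hlaw j ▸ ae_pos_expMeasure_one)

variable [Fintype ι] [DecidableEq ι]

theorem measure_forall_mul_lt_eq [IsProbabilityMeasure μ] (hmeas : ∀ j, Measurable (R j))
    (hindep : iIndepFun R μ) (hlaw : ∀ j, μ.map (R j) = expMeasure 1) (i : ι) {d : ι → ℝ}
    (hd : ∀ j, 0 ≤ d j) :
    μ {ω | ∀ j ≠ i, d j * R i ω < R j ω} =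
      ENNReal.ofReal (1 / (1 + ∑ j ∈ univ.erase i, d j)) := by
  set T := univ.erase i
  let W : Ω → T → ℝ := fun ω j => R j ω
  have hW : Measurable W := measurable_pi_lambda _ fun j => hmeas j
  have hindepW : IndepFun (R i) W μ := by
    exact (hindep.indepFun_finset {i} T (by simp [T]) hmeas).comp
      (measurable_pi_apply ⟨i, mem_singleton_self i⟩) measurable_id
  let S : Set (ℝ × (T → ℝ)) := {p | ∀ j : T, d j * p.1 < p.2 j}
  have hS : MeasurableSet S := measurableSet_setOfPred.2 (by fun_prop)
  have hfiber : ∀ r, 0 ≤ r →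
      μ.map W (Prod.mk r ⁻¹' S) = ENNReal.ofReal (Real.exp (-((∑ j ∈ T, d j) * r))) := by
    intro r hr
    have hpre : W ⁻¹' (Prod.mk r ⁻¹' S) = ⋂ j ∈ T, R j ⁻¹' Set.Ioi (d j * r) := by
      ext ω
      simp [S, W]
    rw [Measure.map_apply hW (measurable_prodMk_left hS), hpre,
      hindep.meas_biInter fun j _ => ⟨Set.Ioi (d j * r), measurableSet_Ioi, rfl⟩,
      prod_congr rfl fun j _ => (Measure.map_apply (hmeas j) measurableSet_Ioi).symm.trans
        (by rw [hlaw j, expMeasure_one_Ioi (mul_nonneg (hd j) hr)]),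
      ← ENNReal.ofReal_prod_of_nonneg fun j _ => (Real.exp_pos _).le, ← Real.exp_sum, sum_mul,
      ← sum_neg_distrib]
  have hpair : {ω | ∀ j ≠ i, d j * R i ω < R j ω} = (fun ω => (R i ω, W ω)) ⁻¹' S := by
    ext ω
    simp [S, W, T]
  rw [hpair, ← Measure.map_apply ((hmeas i).prodMk hW) hS,
    (indepFun_iff_map_prod_eq_prod_map_map (hmeas i).aemeasurable hW.aemeasurable).1 hindepW,
    hlaw i, Measure.prod_apply hS, lintegral_congr_ae (ae_pos_expMeasure_one.mono fun r hr =>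
      hfiber r hr.le), lintegral_exp_neg_mul_expMeasure_one (sum_nonneg fun j _ => hd j)]

theorem measure_forall_mul_lt_mul_eq [IsProbabilityMeasure μ] (hmeas : ∀ j, Measurable (R j))
    (hindep : iIndepFun R μ) (hlaw : ∀ j, μ.map (R j) = expMeasure 1) (i : ι) {a : ℝ}
    (ha : 0 < a) {w : ι → ℝ} (hw : ∀ j, 0 ≤ w j) :
    μ {ω | ∀ j ≠ i, w j * R i ω < a * R j ω} =
      ENNReal.ofReal (a / (a + ∑ j ∈ univ.erase i, w j)) := by
  have hset : {ω | ∀ j ≠ i, w j * R i ω < a * R j ω} =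
      {ω | ∀ j ≠ i, w j / a * R i ω < R j ω} := by
    ext ω
    simp only [Set.mem_ofPred_eq, div_mul_eq_mul_div, div_lt_iff₀' ha]
  rw [hset, measure_forall_mul_lt_eq hmeas hindep hlaw i fun j => div_nonneg (hw j) ha.le,
    ← sum_div]
  congr 1
  field_simp

theorem measure_forall_div_lt_div_eq [IsProbabilityMeasure μ] (hmeas : ∀ j, Measurable (R j))
    (hindep : iIndepFun R μ) (hlaw : ∀ j, μ.map (R j) = expMeasure 1) {x : ι → ℝ}
    (hx : ∀ j, 0 ≤ x j) (i : ι) (hxi : 0 < x i) :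
    μ {ω | ∀ j ≠ i, 0 < x j → R i ω / x i < R j ω / x j} =
      ENNReal.ofReal (x i / ∑ j, x j) := by
  have hae : {ω | ∀ j ≠ i, 0 < x j → R i ω / x i < R j ω / x j}
      =ᵐ[μ] {ω | ∀ j ≠ i, x j * R i ω < x i * R j ω} := by
    filter_upwards [ae_forall_pos_of_map_eq_expMeasure hmeas hlaw] with ω hω
    refine propext (forall₂_congr fun j _ => ?_)
    rcases (hx j).eq_or_lt with hxj | hxj
    · simpa [← hxj] using mul_pos hxi (hω j)
    · rw [div_lt_div_iff₀ hxi hxj]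
      simp [hxj, mul_comm]
  rw [measure_congr hae, measure_forall_mul_lt_mul_eq hmeas hindep hlaw i hxi hx,
    add_sum_erase _ _ (mem_univ i)]

theorem ofReal_one_sub_sum_abs_sub_le_measure_exists [IsProbabilityMeasure μ]
    (hmeas : ∀ j, Measurable (R j)) (hindep : iIndepFun R μ)
    (hlaw : ∀ j, μ.map (R j) = expMeasure 1) {x y : ι → ℝ} (hx : ∀ j, 0 ≤ x j)
    (hx1 : ∑ j, x j = 1) (hy : ∀ j, 0 ≤ y j) (hy1 : ∑ j, y j = 1) :
    ENNReal.ofReal (1 - ∑ j, |x j - y j|) ≤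
      μ {ω | ∃ i, 0 < x i ∧ 0 < y i ∧
        (∀ j ≠ i, 0 < x j → R i ω / x i < R j ω / x j) ∧
        (∀ j ≠ i, 0 < y j → R i ω / y i < R j ω / y j)} := by
  let S := univ.filter fun i => 0 < min (x i) (y i)
  let E i := {ω | ∀ j ≠ i, max (x j) (y j) * R i ω < min (x i) (y i) * R j ω}
  let q i := min (x i) (y i) / (min (x i) (y i) + ∑ j ∈ univ.erase i, max (x j) (y j))
  have hpos := ae_forall_pos_of_map_eq_expMeasure hmeas hlaw
  have hq_nonneg (i : ι) : 0 ≤ q i :=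
    div_nonneg (le_min (hx i) (hy i))
      (add_nonneg (le_min (hx i) (hy i)) (sum_nonneg fun j _ => (hx j).trans (le_max_left _ _)))
  have hE_disj : (S : Set ι).Pairwise (AEDisjoint μ on E) := by
    intro i _ k _ hik
    refine measure_eq_zero_iff_ae_notMem.2 ?_
    filter_upwards [hpos] with ω hω ⟨hi, hk⟩
    exact not_forall_max_mul_lt_min_mul (fun j => (hω j).le) hik hi hk
  refine le_trans ?_ (measure_mono_ae (s := ⋃ i ∈ S, E i) ?_)
  · calc ENNReal.ofReal (1 - ∑ j, |x j - y j|)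
        ≤ ENNReal.ofReal (∑ i, q i) :=
          ENNReal.ofReal_le_ofReal (one_sub_sum_abs_sub_le_sum_min_div hx hx1 hy hy1)
      _ = ∑ i ∈ S, ENNReal.ofReal (q i) := by
          rw [← sum_filter_of_ne fun i _ hne => (le_min (hx i) (hy i)).lt_of_ne fun h0 =>
            hne (by simp [q, ← h0]), ENNReal.ofReal_sum_of_nonneg fun i _ => hq_nonneg i]
      _ = ∑ i ∈ S, μ (E i) := sum_congr rfl fun i hi =>
          (measure_forall_mul_lt_mul_eq hmeas hindep hlaw i (mem_filter.1 hi).2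
            fun j => (hx j).trans (le_max_left _ _)).symm
      _ = μ (⋃ i ∈ S, E i) := (measure_biUnion_finset₀ hE_disj fun i _ =>
          (measurableSet_setOfPred.2 (by fun_prop)).nullMeasurableSet).symm
  · filter_upwards [hpos] with ω hω hmem
    obtain ⟨i, hi, hωi⟩ := Set.mem_iUnion₂.1 hmem
    obtain ⟨hxi, hyi⟩ := lt_min_iff.1 (mem_filter.1 hi).2
    have hR (j : ι) : 0 ≤ R j ω := (hω j).le
    exact ⟨i, hxi, hyi,
      forall_div_lt_div_of_forall_mul_lt_mul (r := (R · ω)) hR hxi (min_le_left _ _)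
        (fun j => le_max_left _ _) hωi,
      forall_div_lt_div_of_forall_mul_lt_mul (r := (R · ω)) hR hyi (min_le_right _ _)
        (fun j => le_max_right _ _) hωi⟩

end ExponentialRace

theorem statement16_general (n : ℕ)
    (Ω : Type) [MeasurableSpace Ω] (μ : Measure Ω) [IsProbabilityMeasure μ]
    (R : Fin n → Ω → ℝ)
    (hmeas : ∀ i, Measurable (R i))
    (hindep : iIndepFun R μ)
    (hexp : ∀ (i : Fin n) (t : ℝ), 0 ≤ t →
      μ {ω | R i ω ≤ t} = ENNReal.ofReal (1 - Real.exp (-t))) :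
    (∀ x : Fin n → ℝ, memSimplex n x → ∀ i : Fin n, 0 < x i →
      μ {ω | ∀ j : Fin n, j ≠ i → 0 < x j → R i ω / x i < R j ω / x j}
        = ENNReal.ofReal (x i)) ∧
    (∀ x y : Fin n → ℝ, memSimplex n x → memSimplex n y →
      ENNReal.ofReal (1 - ∑ j, |x j - y j|) ≤
        μ {ω | ∃ i : Fin n, 0 < x i ∧ 0 < y i ∧
          (∀ j : Fin n, j ≠ i → 0 < x j → R i ω / x i < R j ω / x j) ∧
          (∀ j : Fin n, j ≠ i → 0 < y j → R i ω / y i < R j ω / y j)}) := by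
  have hlaw (i : Fin n) : μ.map (R i) = expMeasure 1 :=
    map_eq_expMeasure_one_of_cdf (hmeas i) (hexp i)
  refine ⟨fun x hx i hxi => ?_, fun x y hx hy => ?_⟩
  · rw [measure_forall_div_lt_div_eq hmeas hindep hlaw (fun j => (hx.1 j).1) i hxi, hx.2, div_one]
  · exact ofReal_one_sub_sum_abs_sub_le_measure_exists hmeas hindep hlaw (fun j => (hx.1 j).1) hx.2
      (fun j => (hy.1 j).1) hy.2

/-- Let `R_1, …, R_n` be i.i.d. `Exp(1)` random variables (characterized by their CDF
`P[R_i ≤ t] = 1 − e^{−t}` for `t ≥ 0`). Then (i) for every `x ∈ Δ_n` and `i` with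
`x_i > 0`, `P[R_i/x_i < R_j/x_j ∀ j ≠ i with x_j > 0] = x_i`; and (ii) for all
`x, y ∈ Δ_n`, the probability that some `i` with `x_i, y_i > 0` minimizes both
`R_j/x_j` and `R_j/y_j` (strictly) is at least `1 − ∑_j |x_j − y_j|`. -/
theorem statement16 (n : ℕ) (hn : 1 ≤ n)
    (Ω : Type) [MeasurableSpace Ω] (μ : Measure Ω) [IsProbabilityMeasure μ]
    (R : Fin n → Ω → ℝ)
    (hmeas : ∀ i, Measurable (R i))
    (hindep : iIndepFun R μ)
    (hexp : ∀ (i : Fin n) (t : ℝ), 0 ≤ t →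
      μ {ω | R i ω ≤ t} = ENNReal.ofReal (1 - Real.exp (-t))) :
    (∀ x : Fin n → ℝ, memSimplex n x → ∀ i : Fin n, 0 < x i →
      μ {ω | ∀ j : Fin n, j ≠ i → 0 < x j → R i ω / x i < R j ω / x j}
        = ENNReal.ofReal (x i)) ∧
    (∀ x y : Fin n → ℝ, memSimplex n x → memSimplex n y →
      ENNReal.ofReal (1 - ∑ j, |x j - y j|) ≤
        μ {ω | ∃ i : Fin n, 0 < x i ∧ 0 < y i ∧
          (∀ j : Fin n, j ≠ i → 0 < x j → R i ω / x i < R j ω / x j) ∧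
          (∀ j : Fin n, j ≠ i → 0 < y j → R i ω / y i < R j ω / y j)}) :=
  statement16_general n Ω μ R hmeas hindep hexp
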